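/- For any labeled poset (P,ω) with p elements, the map Φ defined by Φσ = σ + δ_ε, where δ_ε(x) is the maximum ε-weight of a saturated chain from x to a maximal element, is an injection from the set of (P,ε)-partitions with largest part at most n into the set of (P,-ε)-partitions with largest part at most n + r(ε), where r(ε) is the maximum ε-weight over all maximal chains. -/

import Mathlib

open Polynomial

variable {P : Type*}

/-- The ε-weight of a chain `x₀ ⋖ x₁ ⋖ ⋯ ⋖ xₙ`, recorded as a list:
the sum `Σ ε(x_{i-1}, x_i)` over consecutive pairs. -/
def chainWeight (ε : P → P → ℤ) (c : List P) : ℤ :=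
  ((c.zip c.tail).map fun q => ε q.1 q.2).sum

/-- A (nonempty) saturated chain of the poset `P`, as a list of elements with
each member covered by the next. -/
def IsSatChain [PartialOrder P] (c : List P) : Prop :=
  c ≠ [] ∧ c.Chain' (· ⋖ ·)

/-- A maximal chain: a saturated chain starting at a minimal element and
ending at a maximal element. -/
def IsMaxChainL [PartialOrder P] (c : List P) : Prop :=
  IsSatChain c ∧ (∀ x ∈ c.head?, IsMin x) ∧ (∀ x ∈ c.getLast?, IsMax x)

/-- A saturated chain starting at a minimal element of `P` and ending at `x`. -/
def IsSatChainFromMinTo [PartialOrder P] (x : P) (c : List P) : Prop :=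
  IsSatChain c ∧ (∀ y ∈ c.head?, IsMin y) ∧ c.getLast? = some x

/-- `ε` takes only the values `1` and `-1` on covering relations. -/
def IsSignLabeling [PartialOrder P] (ε : P → P → ℤ) : Prop :=
  ∀ x y : P, x ⋖ y → ε x y = 1 ∨ ε x y = -1

/-- `P` is `ε`-graded of rank `r`: every maximal chain has ε-weight `r`. -/
def IsEGraded [PartialOrder P] (ε : P → P → ℤ) (r : ℤ) : Prop :=
  ∀ c : List P, IsMaxChainL c → chainWeight ε c = r

/-- A `(P,ε)`-partition: an order-reversing map `σ : P → {1,2,…}` which is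
strict on covering relations labeled `-1`. -/
def IsPPartition [PartialOrder P] (ε : P → P → ℤ) (σ : P → ℤ) : Prop :=
  (∀ x, 1 ≤ σ x) ∧ (∀ x y : P, x ≤ y → σ y ≤ σ x) ∧
  (∀ x y : P, x ⋖ y → ε x y = -1 → σ y < σ x)

/-- `Ω(P,ε;n)`: the number of `(P,ε)`-partitions with largest part at most `n`. -/
noncomputable def OmegaCount [PartialOrder P] (ε : P → P → ℤ) (n : ℕ) : ℕ :=
  Nat.card {σ : P → ℤ // IsPPartition ε σ ∧ ∀ x, σ x ≤ (n : ℤ)}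

/-- A saturated chain starting at `x` and ending at a maximal element. -/
def IsSatChainFromToMax [PartialOrder P] (x : P) (c : List P) : Prop :=
  IsSatChain c ∧ c.head? = some x ∧ (∀ y ∈ c.getLast?, IsMax y)

/-!
Along a covering relation `x ⋖ y`, prolonging a chain from `y` by the step `x ⋖ y` shows
`δ x ≥ δ y + ε(x,y)`. Adding `δ` to `σ` therefore turns a weak descent on a `+1`-edge into a
strict one, and on a `-1`-edge costs at most one unit of the strict descent of `σ`: `σ + δ` is
order-reversing and strict exactly where `-ε` demands it. Since `δ` vanishes on maximal elements
and is at most `r` on minimal ones, the values of `σ + δ` stay between `1` and `n + r`.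
Injectivity is clear, `Φ` being a translation.
-/

lemma chainWeight_singleton (ε : P → P → ℤ) (x : P) : chainWeight ε [x] = 0 := rfl

lemma chainWeight_cons_cons (ε : P → P → ℤ) (x y : P) (c : List P) :
    chainWeight ε (x :: y :: c) = ε x y + chainWeight ε (y :: c) := rfl

variable [PartialOrder P]

namespace IsSatChainFromToMax

variable {x y : P} {c : List P}

lemma exists_eq_cons (hc : IsSatChainFromToMax x c) : ∃ c', c = x :: c' := by
  obtain ⟨⟨hne, -⟩, hhead, -⟩ := hc
  obtain ⟨a, c', rfl⟩ := List.exists_cons_of_ne_nil hne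
  exact ⟨c', by simpa using hhead⟩

lemma singleton (hx : IsMax x) : IsSatChainFromToMax x [x] :=
  ⟨⟨List.cons_ne_nil _ _, List.isChain_singleton _⟩, rfl, by simpa using hx⟩

lemma cons (hxy : x ⋖ y) (hc : IsSatChainFromToMax y (y :: c)) :
    IsSatChainFromToMax x (x :: y :: c) :=
  ⟨⟨List.cons_ne_nil _ _, List.isChain_cons_cons.mpr ⟨hxy, hc.1.2⟩⟩, rfl,
    by simpa using hc.2.2⟩

lemma eq_singleton_of_isMax (hx : IsMax x) (hc : IsSatChainFromToMax x c) : c = [x] := by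
  obtain ⟨c', rfl⟩ := hc.exists_eq_cons
  cases c' with
  | nil => rfl
  | cons y c'' => exact absurd (List.isChain_cons_cons.mp hc.1.2).1.lt hx.not_lt

lemma isMaxChainL (hc : IsSatChainFromToMax x c) (hx : IsMin x) : IsMaxChainL c := by
  obtain ⟨c', rfl⟩ := hc.exists_eq_cons
  exact ⟨hc.1, by simpa using hx, hc.2.2⟩

end IsSatChainFromToMax

/-- The paper's `δ_ε`. -/
def IsEpsCoheight (ε : P → P → ℤ) (δ : P → ℤ) : Prop :=
  ∀ x : P, IsGreatest
    {w : ℤ | ∃ c : List P, IsSatChainFromToMax x c ∧ chainWeight ε c = w} (δ x)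

namespace IsEpsCoheight

variable {ε : P → P → ℤ} {δ : P → ℤ} {x y : P}

lemma add_le_of_covBy (hδ : IsEpsCoheight ε δ) (hxy : x ⋖ y) : ε x y + δ y ≤ δ x := by
  obtain ⟨c, hc, hw⟩ := (hδ y).1
  obtain ⟨c', rfl⟩ := hc.exists_eq_cons
  exact (hδ x).2 ⟨x :: y :: c', hc.cons hxy, by rw [chainWeight_cons_cons, hw]⟩

lemma eq_zero_of_isMax (hδ : IsEpsCoheight ε δ) (hx : IsMax x) : δ x = 0 := by
  refine le_antisymm ?_ ((hδ x).2 ⟨[x], .singleton hx, chainWeight_singleton ε x⟩)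
  obtain ⟨c, hc, hw⟩ := (hδ x).1
  rw [← hw, hc.eq_singleton_of_isMax hx, chainWeight_singleton]

lemma le_of_isMin (hδ : IsEpsCoheight ε δ) {r : ℤ}
    (hr : IsGreatest {w : ℤ | ∃ c : List P, IsMaxChainL c ∧ chainWeight ε c = w} r)
    (hx : IsMin x) : δ x ≤ r := by
  obtain ⟨c, hc, hw⟩ := (hδ x).1
  exact hr.2 ⟨c, hc.isMaxChainL hx, hw⟩

end IsEpsCoheight

lemma antitone_of_forall_covBy [Finite P] {β : Type*} [Preorder β] {f : P → β}
    (h : ∀ a b : P, a ⋖ b → f b ≤ f a) : Antitone f :=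
  letI := LocallyFiniteOrder.ofFiniteIcc fun a b : P => Set.toFinite (Set.Icc a b)
  (antitone_iff_forall_covBy f).mpr h

namespace IsPPartition

variable {ε : P → P → ℤ} {δ σ : P → ℤ}

lemma add_lt_add_of_covBy (hδ : IsEpsCoheight ε δ) (hσ : IsPPartition ε σ) {x y : P}
    (hxy : x ⋖ y) (hε : ε x y = 1) : σ y + δ y < σ x + δ x := by
  have hδxy := hδ.add_le_of_covBy hxy
  have hσxy := hσ.2.1 x y hxy.le
  omega

lemma add_le_add_of_covBy (hsign : IsSignLabeling ε) (hδ : IsEpsCoheight ε δ)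
    (hσ : IsPPartition ε σ) {x y : P} (hxy : x ⋖ y) : σ y + δ y ≤ σ x + δ x := by
  rcases hsign x y hxy with hε | hε
  · exact (hσ.add_lt_add_of_covBy hδ hxy hε).le
  · have hδxy := hδ.add_le_of_covBy hxy
    have hσxy := hσ.2.2 x y hxy hε
    omega

lemma antitone_add [Finite P] (hsign : IsSignLabeling ε) (hδ : IsEpsCoheight ε δ)
    (hσ : IsPPartition ε σ) : Antitone fun x => σ x + δ x :=
  antitone_of_forall_covBy fun _ _ => hσ.add_le_add_of_covBy hsign hδ

lemma add_coheight [Finite P] (hsign : IsSignLabeling ε) (hδ : IsEpsCoheight ε δ)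
    (hσ : IsPPartition ε σ) : IsPPartition (fun x y => -ε x y) (fun x => σ x + δ x) := by
  have hanti := hσ.antitone_add hsign hδ
  refine ⟨fun x => ?_, fun x y hxy => hanti hxy, fun x y hxy hε => ?_⟩
  · obtain ⟨m, hxm, hm⟩ := Finite.exists_le_maximal (p := fun _ : P => True) (a := x) trivial
    calc 1 ≤ σ m := hσ.1 m
      _ = σ m + δ m := by rw [hδ.eq_zero_of_isMax (maximal_true.mp hm), add_zero]
      _ ≤ σ x + δ x := hanti hxm
  · exact hσ.add_lt_add_of_covBy hδ hxy (neg_inj.mp hε)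

lemma add_coheight_le [Finite P] (hsign : IsSignLabeling ε) (hδ : IsEpsCoheight ε δ)
    (hσ : IsPPartition ε σ) {N r : ℤ} (hσN : ∀ x, σ x ≤ N)
    (hr : IsGreatest {w : ℤ | ∃ c : List P, IsMaxChainL c ∧ chainWeight ε c = w} r) (x : P) :
    σ x + δ x ≤ N + r := by
  obtain ⟨m, hmx, hm⟩ := Finite.exists_le_minimal (p := fun _ : P => True) (a := x) trivial
  calc σ x + δ x ≤ σ m + δ m := hσ.antitone_add hsign hδ hmx
    _ ≤ N + r := add_le_add (hσN m) (hδ.le_of_isMin hr (minimal_true.mp hm))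

end IsPPartition

theorem Phi_injection_general {P : Type*} [PartialOrder P] [Fintype P]
    (ε : P → P → ℤ) (hsign : IsSignLabeling ε)
    (δ : P → ℤ)
    (hδ : ∀ x : P, IsGreatest {w : ℤ | ∃ c : List P, IsSatChainFromToMax x c ∧
      chainWeight ε c = w} (δ x))
    (r : ℤ)
    (hr : IsGreatest {w : ℤ | ∃ c : List P, IsMaxChainL c ∧ chainWeight ε c = w} r)
    (n : ℕ) :
    (∀ σ : P → ℤ, IsPPartition ε σ → (∀ x, σ x ≤ (n : ℤ)) →
      IsPPartition (fun x y => -ε x y) (fun x => σ x + δ x) ∧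
      (∀ x, σ x + δ x ≤ (n : ℤ) + r)) ∧
    Set.InjOn (fun (σ : P → ℤ) => fun x => σ x + δ x)
      {σ : P → ℤ | IsPPartition ε σ ∧ ∀ x, σ x ≤ (n : ℤ)} :=
  ⟨fun _ hσ hσn => ⟨hσ.add_coheight hsign hδ, hσ.add_coheight_le hsign hδ hσn hr⟩,
    fun _ _ _ _ h => funext fun x => add_right_cancel (congrFun h x)⟩

/-- for a labeled poset `(P,ε)`, with `δ(x)` the maximum
ε-weight of a saturated chain from `x` to a maximal element and `r(ε)` the
maximum ε-weight of a maximal chain, the map `Φσ = σ + δ` is an injection of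
the set of `(P,ε)`-partitions with largest part at most `n` into the set of
`(P,-ε)`-partitions with largest part at most `n + r(ε)`. -/
theorem Phi_injection {P : Type*} [PartialOrder P] [Fintype P] [Nonempty P]
    (ε : P → P → ℤ) (hsign : IsSignLabeling ε)
    (δ : P → ℤ)
    (hδ : ∀ x : P, IsGreatest {w : ℤ | ∃ c : List P, IsSatChainFromToMax x c ∧
      chainWeight ε c = w} (δ x))
    (r : ℤ)
    (hr : IsGreatest {w : ℤ | ∃ c : List P, IsMaxChainL c ∧ chainWeight ε c = w} r)
    (n : ℕ) :
    (∀ σ : P → ℤ, IsPPartition ε σ → (∀ x, σ x ≤ (n : ℤ)) →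
      IsPPartition (fun x y => -ε x y) (fun x => σ x + δ x) ∧
      (∀ x, σ x + δ x ≤ (n : ℤ) + r)) ∧
    Set.InjOn (fun (σ : P → ℤ) => fun x => σ x + δ x)
      {σ : P → ℤ | IsPPartition ε σ ∧ ∀ x, σ x ≤ (n : ℤ)} :=
  Phi_injection_general ε hsign δ hδ r hr n
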